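/- Let η be a configuration containing a south-bridge b (contained in Λ⁻⁻) whose support is not tb-tiled. Then the configuration η′ obtained from η by tb-tiling the support of b (i.e., replacing the configuration on the support of b by the one in which every tile of the support is a tb-tile) satisfies H(η′) < H(η). -/

import Mathlib

/- Common framework: two-type Kawasaki dynamics on a finite box in ℤ². -/

abbrev Site := ℤ × ℤ
abbrev Cell := ℤ × ℤ

/-- Nearest-neighbour adjacency on ℤ². -/
def adjacent (x y : Site) : Prop := |x.1 - y.1| + |x.2 - y.2| = 1

instance (x y : Site) : Decidable (adjacent x y) :=
  inferInstanceAs (Decidable (|x.1 - y.1| + |x.2 - y.2| = 1))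

/-- The four nearest neighbours of a site. -/
def nbrs (x : Site) : Finset Site :=
  {(x.1 + 1, x.2), (x.1 - 1, x.2), (x.1, x.2 + 1), (x.1, x.2 - 1)}

/-- Internal boundary ∂⁻Λ of a finite set Λ ⊂ ℤ². -/
def intBdry (Λ : Finset Site) : Finset Site := Λ.filter (fun x => ¬ nbrs x ⊆ Λ)

/-- Λ⁻ = Λ ∖ ∂⁻Λ. -/
def inner1 (Λ : Finset Site) : Finset Site := Λ \ intBdry Λ

/-- Λ⁻⁻ = Λ⁻ ∖ ∂⁻Λ⁻. -/
def inner2 (Λ : Finset Site) : Finset Site := inner1 Λ \ intBdry (inner1 Λ)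

/-- A configuration on Λ: each site of Λ carries 0 (empty), 1 (type 1) or 2 (type 2);
sites outside Λ are empty. -/
structure Config (Λ : Finset Site) where
  val : Site → Fin 3
  zero_outside : ∀ x, x ∉ Λ → val x = 0

/-- Number of particles of type 1. -/
def numType1 {Λ : Finset Site} (η : Config Λ) : ℕ := (Λ.filter (fun x => η.val x = 1)).card

/-- Number of particles of type 2. -/
def numType2 {Λ : Finset Site} (η : Config Λ) : ℕ := (Λ.filter (fun x => η.val x = 2)).card

/-- Number of active bonds: unordered n.n. pairs of sites of Λ⁻, one carrying a 1 and the
other a 2 (each such unordered pair is counted once, as the ordered pair (type1,type2)). -/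
def numBonds {Λ : Finset Site} (η : Config Λ) : ℕ :=
  ((inner1 Λ ×ˢ inner1 Λ).filter
    (fun p => adjacent p.1 p.2 ∧ η.val p.1 = 1 ∧ η.val p.2 = 2)).card

/-- The Hamiltonian H(η) = −U·B(η) + Δ1·n1(η) + Δ2·n2(η). -/
noncomputable def energy (U Δ1 Δ2 : ℝ) {Λ : Finset Site} (η : Config Λ) : ℝ :=
  -U * numBonds η + Δ1 * numType1 η + Δ2 * numType2 η

/-- Allowed moves of the Kawasaki dynamics: hopping inside Λ, creation and annihilation
at the internal boundary. -/
def Communicates {Λ : Finset Site} (η η' : Config Λ) : Prop :=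
  (∃ x ∈ Λ, ∃ y ∈ Λ, adjacent x y ∧ η.val x = 0 ∧ η.val y ≠ 0 ∧
      η'.val = Function.update (Function.update η.val x (η.val y)) y 0) ∨
  (∃ x ∈ intBdry Λ, ∃ v : Fin 3, v ≠ 0 ∧ η.val x = 0 ∧
      η'.val = Function.update η.val x v) ∨
  (∃ x ∈ intBdry Λ, η.val x ≠ 0 ∧ η'.val = Function.update η.val x 0)

/-- ω is a path of allowed moves from η to η′. -/
def IsPath {Λ : Finset Site} (ω : List (Config Λ)) (η η' : Config Λ) : Prop :=
  ω.head? = some η ∧ ω.getLast? = some η' ∧ ω.Chain' Communicates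

/-- Communication height between two sets of configurations:
Φ(A,B) = min over paths from A to B of the maximal energy along the path. -/
noncomputable def commHeightSet (U Δ1 Δ2 : ℝ) {Λ : Finset Site}
    (A B : Set (Config Λ)) : ℝ :=
  sInf {m : ℝ | ∃ η ∈ A, ∃ η' ∈ B, ∃ ω : List (Config Λ),
    IsPath ω η η' ∧ ∀ ξ ∈ ω, energy U Δ1 Δ2 ξ ≤ m}

/-- Communication height Φ(η,η′). -/
noncomputable def commHeight (U Δ1 Δ2 : ℝ) {Λ : Finset Site} (η η' : Config Λ) : ℝ :=
  commHeightSet U Δ1 Δ2 {η} {η'}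

/-- Stability level V_η = Φ(η, I_η) − H(η), where I_η = {ξ : H(ξ) < H(η)}. -/
noncomputable def stabLevel (U Δ1 Δ2 : ℝ) {Λ : Finset Site} (η : Config Λ) : ℝ :=
  commHeightSet U Δ1 Δ2 {η} {ξ : Config Λ | energy U Δ1 Δ2 ξ < energy U Δ1 Δ2 η}
    - energy U Δ1 Δ2 η

/-- The set of stable configurations (global minimizers of H). -/
def Xstab (U Δ1 Δ2 : ℝ) (Λ : Finset Site) : Set (Config Λ) :=
  {η | ∀ ξ : Config Λ, energy U Δ1 Δ2 η ≤ energy U Δ1 Δ2 ξ}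

/-- The set of metastable configurations (non-stable configurations of maximal
stability level). -/
def Xmeta (U Δ1 Δ2 : ℝ) (Λ : Finset Site) : Set (Config Λ) :=
  {η | η ∉ Xstab U Δ1 Δ2 Λ ∧
    ∀ ξ : Config Λ, ξ ∉ Xstab U Δ1 Δ2 Λ → stabLevel U Δ1 Δ2 ξ ≤ stabLevel U Δ1 Δ2 η}

/-- The empty configuration □. -/
def emptyConfig (Λ : Finset Site) : Config Λ := ⟨fun _ => 0, fun _ _ => rfl⟩

/-- The critical length ℓ* = ⌈Δ1/(4U − Δ1 − Δ2)⌉. -/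
noncomputable def lstar (U Δ1 Δ2 : ℝ) : ℤ := ⌈Δ1 / (4 * U - Δ1 - Δ2)⌉

/-- The box Λ: in dual coordinates u(x) = ((x1−x2)/2,(x1+x2)/2) the
(L+3/2)×(L+3/2) square centered at the origin, i.e. |x1−x2| ≤ L+1 and |x1+x2| ≤ L+1. -/
noncomputable def latBox (L : ℕ) : Finset Site :=
  (Finset.Icc (-(L : ℤ) - 1) ((L : ℤ) + 1) ×ˢ Finset.Icc (-(L : ℤ) - 1) ((L : ℤ) + 1)).filter
    (fun x => |x.1 - x.2| ≤ (L : ℤ) + 1 ∧ |x.1 + x.2| ≤ (L : ℤ) + 1)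

/-- The m×n dual rectangle of sites (in dual coordinates) with dual lower-left corner p
(in standard coordinates): sites p + i·(1,−1) + j·(1,1) for 0 ≤ i < m, 0 ≤ j < n.
All these sites have the same parity. -/
def dualRect (p : Site) (m n : ℕ) : Finset Site :=
  (Finset.range m ×ˢ Finset.range n).image
    (fun ij => ((p.1 + (ij.1 : ℤ) + (ij.2 : ℤ), p.2 + (ij.2 : ℤ) - (ij.1 : ℤ)) : Site))

/-- The sites adjacent to a set S but not in S. -/
def siteBorder (S : Finset Site) : Finset Site := S.biUnion nbrs \ S

/-- ⊞: the tb-tiled configurations whose particles of type 2 occupy an L×L square in dual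
coordinates filling Λ⁻ (type-2 sites in Λ⁻⁻, surrounding type-1 sites in Λ⁻); these are
the two largest checkerboard droplets (one of each parity). -/
def boxPlus (L : ℕ) : Set (Config (latBox L)) :=
  {η | ∃ p : Site,
      (∀ x, η.val x = 2 ↔ x ∈ dualRect p L L) ∧
      (∀ x, η.val x = 1 ↔ x ∈ siteBorder (dualRect p L L)) ∧
      dualRect p L L ⊆ inner2 (latBox L) ∧
      siteBorder (dualRect p L L) ⊆ inner1 (latBox L)}

/-- The active-bond relation between sites. -/
def bondRel {Λ : Finset Site} (η : Config Λ) (x y : Site) : Prop :=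
  x ∈ inner1 Λ ∧ y ∈ inner1 Λ ∧ adjacent x y ∧
  ((η.val x = 1 ∧ η.val y = 2) ∨ (η.val x = 2 ∧ η.val y = 1))

/-- C is a cluster of η: a maximal connected component of the occupied sites under the
active-bond relation. -/
def IsCluster {Λ : Finset Site} (η : Config Λ) (C : Finset Site) : Prop :=
  ∃ x : Site, η.val x ≠ 0 ∧ ∀ y : Site, y ∈ C ↔ Relation.ReflTransGen (bondRel η) x y

/-- The occupied sites of η form a single cluster. -/
def SingleCluster {Λ : Finset Site} (η : Config Λ) : Prop :=
  ∃ x : Site, η.val x ≠ 0 ∧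
    ∀ y : Site, η.val y ≠ 0 → Relation.ReflTransGen (bondRel η) x y

/-- Dual coordinates, renormalized to land in ℤ² (within a fixed parity class this maps
dual neighbours to adjacent cells). -/
def cellOf (x : Site) : Cell := ((x.1 - x.2).fdiv 2, (x.1 + x.2).fdiv 2)

/-- The sites of Λ occupied by particles of type 2. -/
def type2Sites {Λ : Finset Site} (η : Config Λ) : Finset Site :=
  Λ.filter (fun x => η.val x = 2)

/-- Tile support of a configuration: the polyomino in dual coordinates given by the unit
squares centered at the particles of type 2. -/
def tileSupport {Λ : Finset Site} (η : Config Λ) : Finset Cell :=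
  (type2Sites η).image cellOf

/- ----------  Polyominoes ---------- -/

/-- Perimeter of a polyomino (number of boundary edges, inner boundaries included). -/
def perim (A : Finset Cell) : ℕ :=
  A.sum (fun c => ((nbrs c).filter (fun d => d ∉ A)).card)

def adjIn (A : Finset Cell) (x y : Cell) : Prop := x ∈ A ∧ y ∈ A ∧ adjacent x y

/-- Connectedness of a polyomino. -/
def PolyConnected (A : Finset Cell) : Prop :=
  A.Nonempty ∧ ∀ x ∈ A, ∀ y ∈ A, Relation.ReflTransGen (adjIn A) x y

/-- Number of holes: bounded (= finite) connected components of the complement. -/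
noncomputable def numHoles (A : Finset Cell) : ℕ :=
  Set.ncard {C : Set Cell | ∃ d : Cell, d ∉ A ∧
    C = {e : Cell | Relation.ReflTransGen (fun u v => adjacent u v ∧ u ∉ A ∧ v ∉ A) d e} ∧
    C.Finite}

/-- The four cells having lattice point v as a corner. -/
def cellsAt (v : Cell) : Finset Cell :=
  {(v.1 - 1, v.2 - 1), (v.1 - 1, v.2), (v.1, v.2 - 1), v}

/-- The lattice points that are corners of cells of A. -/
def vertexSet (A : Finset Cell) : Finset Cell :=
  A.biUnion (fun c => {c, (c.1 + 1, c.2), (c.1, c.2 + 1), (c.1 + 1, c.2 + 1)})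

def occAt (A : Finset Cell) (v : Cell) : ℕ := ((cellsAt v).filter (fun c => c ∈ A)).card

/-- Number of convex corners ψ(A): vertices with exactly one incident occupied cell. -/
def convexCorners (A : Finset Cell) : ℕ :=
  (vertexSet A).sum (fun v => if occAt A v = 1 then 1 else 0)

/-- Number of concave corners φ(A): a vertex with three incident occupied cells counts
once, a vertex with two diagonally opposite occupied cells counts twice. -/
def concaveCorners (A : Finset Cell) : ℕ :=
  (vertexSet A).sum (fun v =>
    if occAt A v = 3 then 1
    else if occAt A v = 2 ∧ (((v.1 - 1, v.2 - 1) ∈ A ∧ v ∈ A) ∨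
          ((v.1 - 1, v.2) ∈ A ∧ (v.1, v.2 - 1) ∈ A)) then 2
    else 0)

/-- T(A) = 2P(A) + ψ(A) − φ(A). -/
def Tpoly (A : Finset Cell) : ℤ :=
  2 * (perim A : ℤ) + (convexCorners A : ℤ) - (concaveCorners A : ℤ)

/-- For connected polyominoes, T(A) = 2P(A) + 4 − 4Q(A). -/
noncomputable def Tconn (A : Finset Cell) : ℤ :=
  2 * (perim A : ℤ) + 4 - 4 * (numHoles A : ℤ)

/-- Width (number of columns) of the circumscribing rectangle. -/
def polyWidth (A : Finset Cell) : ℤ :=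
  (WithBot.unbotD 0 (A.image Prod.fst).max) - (WithTop.untopD 0 (A.image Prod.fst).min) + 1

/-- Height (number of rows) of the circumscribing rectangle. -/
def polyHeight (A : Finset Cell) : ℤ :=
  (WithBot.unbotD 0 (A.image Prod.snd).max) - (WithTop.untopD 0 (A.image Prod.snd).min) + 1

/-- A polyomino is monotone if its perimeter equals the perimeter of its circumscribing
rectangle. -/
def MonotonePoly (A : Finset Cell) : Prop :=
  (perim A : ℤ) = 2 * (polyWidth A + polyHeight A)

/-- The reference standard polyomino: an (l+ζ)×l rectangle (quasi-square, ζ ∈ {0,1})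
with a bar of length k attached to a longest side, starting at offset a. -/
def baseStd (l ζ a k : ℕ) : Finset Cell :=
  ((Finset.range (l + ζ)) ×ˢ (Finset.range l)).image
      (fun q => (((q.1 : ℤ), (q.2 : ℤ)) : Cell))
    ∪ (Finset.range k).image (fun i => ((((a + i : ℕ) : ℤ), (l : ℤ)) : Cell))

/-- The eight symmetries of the square lattice. -/
def dihedralMaps : List (Cell → Cell) :=
  [fun c => (c.1, c.2), fun c => (-c.1, c.2), fun c => (c.1, -c.2), fun c => (-c.1, -c.2),
   fun c => (c.2, c.1), fun c => (-c.2, c.1), fun c => (c.2, -c.1), fun c => (-c.2, -c.1)]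

/-- A standard polyomino: a quasi-square with possibly a bar attached to one of its
longest sides (up to lattice symmetries and translations). -/
def IsStandardPoly (A : Finset Cell) : Prop :=
  ∃ l ζ a k : ℕ, 1 ≤ l ∧ ζ ≤ 1 ∧ a + k ≤ l + ζ ∧
    ∃ f ∈ dihedralMaps, ∃ t : Cell,
      A = (baseStd l ζ a k).image (fun c => (((f c).1 + t.1, (f c).2 + t.2) : Cell))

/- ----------  tb-tiled configurations ---------- -/

/-- V_{*,k}: configurations with exactly k particles of type 2, all lying in Λ⁻⁻. -/
def VStar (Λ : Finset Site) (k : ℕ) : Set (Config Λ) :=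
  {η | numType2 η = k ∧ ∀ x, η.val x = 2 → x ∈ inner2 Λ}

/-- V_{*,k}^{4k}: configurations of V_{*,k} with exactly 4k active bonds and no isolated
particle of type 1 (the tb-tiled configurations with k particles of type 2). -/
def VTiled (Λ : Finset Site) (k : ℕ) : Set (Config Λ) :=
  {η | η ∈ VStar Λ k ∧ numBonds η = 4 * k ∧
    ∀ x, η.val x = 1 → ∃ y ∈ nbrs x, η.val y = 2}

/-- All particles of type 2 have the same (site) parity. -/
def SameParity2 {Λ : Finset Site} (η : Config Λ) : Prop :=
  ∀ x y : Site, η.val x = 2 → η.val y = 2 → (x.1 + x.2) % 2 = (y.1 + y.2) % 2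

/-- A standard configuration: tile support a standard polyomino (all type-2 particles of
one parity). -/
def IsStandardConfig {Λ : Finset Site} (η : Config Λ) : Prop :=
  SameParity2 η ∧ IsStandardPoly (tileSupport η)

/-- A tb-tiled configuration: at least one particle of type 2, every particle of type 2
saturated, no isolated particle of type 1. -/
def IsTbTiled {Λ : Finset Site} (η : Config Λ) : Prop :=
  (∃ x, η.val x = 2) ∧
  (∀ x, η.val x = 2 → ∀ y ∈ nbrs x, η.val y = 1) ∧
  (∀ x, η.val x = 1 → ∃ y ∈ nbrs x, η.val y = 2)

/-- η is the tb-tiled droplet with type-2 sites S: type-2 exactly on S, type-1 exactly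
on the border of S, empty elsewhere. -/
def IsTbDroplet {Λ : Finset Site} (η : Config Λ) (S : Finset Site) : Prop :=
  (∀ x, η.val x = 2 ↔ x ∈ S) ∧ (∀ x, η.val x = 1 ↔ x ∈ siteBorder S)

/- ----------  cluster-wise quantities ---------- -/

def numType1In {Λ : Finset Site} (η : Config Λ) (C : Finset Site) : ℕ :=
  (C.filter (fun x => η.val x = 1)).card

def numType2In {Λ : Finset Site} (η : Config Λ) (C : Finset Site) : ℕ :=
  (C.filter (fun x => η.val x = 2)).card

def numBondsIn {Λ : Finset Site} (η : Config Λ) (C : Finset Site) : ℕ :=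
  ((C ×ˢ C).filter (fun q => q.1 ∈ inner1 Λ ∧ q.2 ∈ inner1 Λ ∧ adjacent q.1 q.2 ∧
    η.val q.1 = 1 ∧ η.val q.2 = 2)).card

def tileSupportIn {Λ : Finset Site} (η : Config Λ) (C : Finset Site) : Finset Cell :=
  (C.filter (fun x => η.val x = 2)).image cellOf

/-- Number of active bonds incident to the site x. -/
def bondDeg {Λ : Finset Site} (η : Config Λ) (x : Site) : ℕ :=
  ((nbrs x).filter (fun y => x ∈ inner1 Λ ∧ y ∈ inner1 Λ ∧
    ((η.val x = 1 ∧ η.val y = 2) ∨ (η.val x = 2 ∧ η.val y = 1)))).card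

/-- Number of missing bonds of the type-1 particles of C. -/
def missingBonds {Λ : Finset Site} (η : Config Λ) (C : Finset Site) : ℤ :=
  ∑ x ∈ C.filter (fun x => η.val x = 1), (4 - (bondDeg η x : ℤ))

/- ----------  geometry for the energy-reduction mechanisms ---------- -/

/-- A site is lattice-connecting: there is a n.n. path of empty sites from it to ∂⁻Λ. -/
def LatticeConnecting {Λ : Finset Site} (η : Config Λ) (x : Site) : Prop :=
  ∃ l : List Site, List.Chain adjacent x l ∧
    (x :: l).getLast (List.cons_ne_nil x l) ∈ intBdry Λ ∧
    ∀ y ∈ l, y ∈ Λ ∧ η.val y = 0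

/-- A pending dimer (x,y): a lattice-connecting type-1 particle x whose unique active
bond is with the adjacent type-2 particle y, which has at most three active bonds. -/
def PendingDimer {Λ : Finset Site} (η : Config Λ) (x y : Site) : Prop :=
  bondRel η x y ∧ η.val x = 1 ∧ η.val y = 2 ∧ LatticeConnecting η x ∧
  bondDeg η x = 1 ∧ bondDeg η y ≤ 3

/-- The sites of a horizontal (in dual coordinates) beam of length l: l+1 particles of
type 1 at mutual dual distance 1, with left-most site p. -/
def beamSites (p : Site) (l : ℕ) : Finset Site :=
  (Finset.range (l + 1)).image (fun i : ℕ => ((p.1 + (i : ℤ), p.2 - (i : ℤ)) : Site))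

/-- The center row of the (south) support of the beam. -/
def centerSites (p : Site) (l : ℕ) : Finset Site :=
  (Finset.range l).image (fun i : ℕ => ((p.1 + (i : ℤ), p.2 - 1 - (i : ℤ)) : Site))

/-- The basement row of the (south) support of the beam. -/
def basementSites (p : Site) (l : ℕ) : Finset Site :=
  (Finset.range (l + 1)).image (fun i : ℕ => ((p.1 - 1 + (i : ℤ), p.2 - 1 - (i : ℤ)) : Site))

/-- The (south) support of a beam/bridge. -/
def bridgeSupport (p : Site) (l : ℕ) : Finset Site :=
  beamSites p l ∪ centerSites p l ∪ basementSites p l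

/-- The 12 sites of a slot: a 4×4 block minus its four corner sites; p is the lower-left
corner of the block. -/
def slotSites (p : Site) : Finset Site :=
  ((Finset.range 4 ×ˢ Finset.range 4).image
      (fun ij => ((p.1 + (ij.1 : ℤ), p.2 + (ij.2 : ℤ)) : Site))) \
    {(p.1, p.2), (p.1 + 3, p.2), (p.1, p.2 + 3), (p.1 + 3, p.2 + 3)}

/-- The slot-conjugate (diagonally opposite) ordered pairs of central sites of a slot. -/
def slotDiagPairs (p : Site) : List (Site × Site) :=
  [((p.1 + 1, p.2 + 1), (p.1 + 2, p.2 + 2)), ((p.1 + 2, p.2 + 2), (p.1 + 1, p.2 + 1)),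
   ((p.1 + 1, p.2 + 2), (p.1 + 2, p.2 + 1)), ((p.1 + 2, p.2 + 1), (p.1 + 1, p.2 + 2))]

/-- The type-2 sites of the bar added on side d (0 = north, 1 = south, 2 = east,
3 = west, in dual coordinates) of the m×n dual rectangle with corner p. -/
def sideBar (p : Site) (m n : ℕ) (d : Fin 4) : Finset Site :=
  if d = 0 then dualRect (p.1 + (n : ℤ), p.2 + (n : ℤ)) m 1
  else if d = 1 then dualRect (p.1 - 1, p.2 - 1) m 1
  else if d = 2 then dualRect (p.1 + (m : ℤ), p.2 - (m : ℤ)) 1 n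
  else dualRect (p.1 - 1, p.2 + 1) 1 n

/-- The length of side d of an m×n dual rectangle. -/
def sideLen (m n : ℕ) (d : Fin 4) : ℕ := if (d : ℕ) ≤ 1 then m else n

/-- The type-2 sites left after removing the outermost bar on side d of the m×n dual
rectangle with corner p. -/
def shrunkRect (p : Site) (m n : ℕ) (d : Fin 4) : Finset Site :=
  if d = 0 then dualRect p m (n - 1)
  else if d = 1 then dualRect (p.1 + 1, p.2 + 1) m (n - 1)
  else if d = 2 then dualRect p (m - 1) n
  else dualRect (p.1 + 1, p.2 - 1) (m - 1) n

/-!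
Charge every active bond to its type-2 end, so that `H` is a sum of site energies.
Tb-tiling the support changes values only in the center and the basement, and every site of
the support touching the outside ends up of type 1, so no site outside the support gains
energy. Inside the support the beam is unchanged; the change at each center site, together
with half the change at each of its two basement neighbours, is charged to its tile (the
pillars are already of type 1 and contribute nothing). Under `0 < Δ1`, `Δ2 - Δ1 > 2U` and
`Δ1 + Δ2 < 4U`, a check of the 27 value patterns of a tile shows that its charge is `≤ 0`,
and `< 0` unless the tile is tb-tiled or has a type-1 center above two type-2 basement sites.
The latter cannot occur next to a type-1 basement site, so a run of zero-charge tiles starting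
at the west pillar is tb-tiled; hence a support that is not tb-tiled has a tile of negative
charge.
-/

open Finset

lemma mem_nbrs_comm {x y : Site} : x ∈ nbrs y ↔ y ∈ nbrs x := by
  simp only [nbrs, mem_insert, mem_singleton, Prod.ext_iff]
  omega

lemma card_nbrs (x : Site) : #(nbrs x) = 4 := by
  simp only [nbrs]
  repeat rw [card_insert_of_notMem (by simp [Prod.ext_iff] <;> omega)]
  rfl

lemma adjacent_iff_mem_nbrs {x y : Site} : adjacent x y ↔ x ∈ nbrs y := by
  simp only [nbrs, mem_insert, mem_singleton, adjacent, Prod.ext_iff]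
  rcases abs_cases (x.1 - y.1) with ⟨h1, _⟩ | ⟨h1, _⟩ <;>
    rcases abs_cases (x.2 - y.2) with ⟨h2, _⟩ | ⟨h2, _⟩ <;> omega

lemma card_filter_le_sub_two_add {α : Type*} [DecidableEq α] (s : Finset α) (P : α → Prop)
    [DecidablePred P] {a b : α} (ha : a ∈ s) (hb : b ∈ s) (hab : a ≠ b) :
    #(s.filter P) ≤ #s - 2 + (if P a then 1 else 0) + (if P b then 1 else 0) := by
  have hb' : b ∈ s.erase a := mem_erase.2 ⟨hab.symm, hb⟩
  have hrest := card_filter_le ((s.erase a).erase b) P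
  rw [card_erase_of_mem hb', card_erase_of_mem ha] at hrest
  rw [card_filter] at hrest ⊢
  rw [← add_sum_erase s _ ha, ← add_sum_erase _ _ hb']
  omega

lemma inner2_subset_inner1 (Λ : Finset Site) : inner2 Λ ⊆ inner1 Λ := sdiff_subset

lemma inner1_subset (Λ : Finset Site) : inner1 Λ ⊆ Λ := sdiff_subset

lemma nbrs_subset_inner1_of_mem_inner2 {Λ : Finset Site} {y : Site} (h : y ∈ inner2 Λ) :
    nbrs y ⊆ inner1 Λ := by
  simp only [inner2, intBdry, mem_sdiff, mem_filter] at h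
  by_contra hc
  exact h.2 ⟨h.1, hc⟩

section SiteEnergy

variable (U Δ1 Δ2 : ℝ) {Λ : Finset Site}

lemma bondDeg_of_val_eq_two {η : Config Λ} {y : Site} (hy : η.val y = 2) :
    bondDeg η y
      = #((nbrs y).filter fun x => y ∈ inner1 Λ ∧ x ∈ inner1 Λ ∧ η.val x = 1) := by
  unfold bondDeg
  congr 1
  refine filter_congr fun x _ => ?_
  simp [hy]

/-- Every active bond is charged to its type-2 end. -/
noncomputable def siteEnergy (η : Config Λ) (y : Site) : ℝ :=
  (if η.val y = 1 then Δ1 else 0) + (if η.val y = 2 then Δ2 - U * bondDeg η y else 0)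

lemma numBonds_eq_sum_bondDeg (η : Config Λ) :
    numBonds η = ∑ y ∈ Λ, if η.val y = 2 then bondDeg η y else 0 := by
  rw [numBonds, card_filter, sum_product_right, ← sum_subset (inner1_subset Λ)]
  · refine sum_congr rfl fun y hy => ?_
    split_ifs with h2
    · rw [bondDeg_of_val_eq_two h2, ← card_filter]
      congr 1
      ext x
      simp [adjacent_iff_mem_nbrs, h2, hy]
      tauto
    · simp [h2]
  · intro y _ hy
    split_ifs with h2
    · simp [bondDeg_of_val_eq_two h2, hy]
    · rfl

lemma energy_eq_sum_siteEnergy (η : Config Λ) :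
    energy U Δ1 Δ2 η = ∑ y ∈ Λ, siteEnergy U Δ1 Δ2 η y := by
  have h1 : (numType1 η : ℝ) = ∑ y ∈ Λ, if η.val y = 1 then 1 else 0 := by
    rw [sum_boole]; rfl
  have h2 : (numType2 η : ℝ) = ∑ y ∈ Λ, if η.val y = 2 then 1 else 0 := by
    rw [sum_boole]; rfl
  rw [energy, numBonds_eq_sum_bondDeg, h1, h2]
  push_cast [apply_ite (Nat.cast : ℕ → ℝ)]
  simp only [mul_sum, ← sum_add_distrib]
  refine sum_congr rfl fun y _ => ?_
  unfold siteEnergy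
  split_ifs <;> ring

lemma siteEnergy_le_of_type1_nbrs_kept (hU : 0 ≤ U) {η η' : Config Λ} {y : Site}
    (hy : η'.val y = η.val y) (hnbrs : ∀ x ∈ nbrs y, η.val x = 1 → η'.val x = 1) :
    siteEnergy U Δ1 Δ2 η' y ≤ siteEnergy U Δ1 Δ2 η y := by
  unfold siteEnergy
  rw [hy]
  refine add_le_add le_rfl ?_
  split_ifs with h2
  · have hdeg : bondDeg η y ≤ bondDeg η' y := by
      rw [bondDeg_of_val_eq_two h2, bondDeg_of_val_eq_two (hy.trans h2)]
      exact card_le_card (monotone_filter_right _ fun x hx h => ⟨h.1, h.2.1, hnbrs x hx h.2.2⟩)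
    gcongr
  · rfl

/-- A site outside `S` keeps its value and all its type-1 neighbours, so its energy cannot
increase. -/
lemma energy_sub_le_sum_siteEnergy_sub (hU : 0 ≤ U) {η η' : Config Λ} {S : Finset Site}
    (hSΛ : S ⊆ Λ) (hoff : ∀ x ∉ S, η'.val x = η.val x)
    (hbdry : ∀ x ∈ S, ∀ y ∈ nbrs x, y ∉ S → η'.val x = 1) :
    energy U Δ1 Δ2 η' - energy U Δ1 Δ2 η
      ≤ ∑ y ∈ S, (siteEnergy U Δ1 Δ2 η' y - siteEnergy U Δ1 Δ2 η y) := by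
  have houtside :
      ∑ y ∈ Λ \ S, (siteEnergy U Δ1 Δ2 η' y - siteEnergy U Δ1 Δ2 η y) ≤ 0 := by
    refine sum_nonpos fun y hy => sub_nonpos.2 ?_
    have hyS := (mem_sdiff.1 hy).2
    refine siteEnergy_le_of_type1_nbrs_kept U Δ1 Δ2 hU (hoff y hyS) fun x hx h1 => ?_
    by_cases hxS : x ∈ S
    · exact hbdry x hxS y (mem_nbrs_comm.1 hx) hyS
    · rw [hoff x hxS, h1]
  rw [energy_eq_sum_siteEnergy, energy_eq_sum_siteEnergy, ← sum_sub_distrib,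
    ← sum_sdiff hSΛ]
  linarith

end SiteEnergy

section SiteEnergyBounds

variable (U Δ1 Δ2 : ℝ) {Λ : Finset Site}

/-- `d₁`, `d₂` are the values of two neighbours; each of the other two neighbours may carry
one bond. -/
noncomputable def siteEnergyBound (c d₁ d₂ : Fin 3) : ℝ :=
  (if c = 1 then Δ1 else 0) +
    (if c = 2 then Δ2 - U * (2 + (if d₁ = 1 then 1 else 0) + (if d₂ = 1 then 1 else 0)) else 0)

lemma siteEnergyBound_le_siteEnergy (hU : 0 ≤ U) (η : Config Λ) {y a b : Site}
    (ha : a ∈ nbrs y) (hb : b ∈ nbrs y) (hab : a ≠ b) :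
    siteEnergyBound U Δ1 Δ2 (η.val y) (η.val a) (η.val b) ≤ siteEnergy U Δ1 Δ2 η y := by
  unfold siteEnergyBound siteEnergy
  refine add_le_add le_rfl ?_
  by_cases h2 : η.val y = 2
  · rw [if_pos h2, if_pos h2]
    have hdeg :
        bondDeg η y ≤ 2 + (if η.val a = 1 then 1 else 0) + (if η.val b = 1 then 1 else 0) := by
      rw [bondDeg_of_val_eq_two h2]
      refine (card_le_card (monotone_filter_right _ fun x _ h => h.2.2)).trans ?_
      simpa [card_nbrs] using card_filter_le_sub_two_add (nbrs y) (η.val · = 1) ha hb hab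
    have hdeg' : (bondDeg η y : ℝ)
        ≤ 2 + (if η.val a = 1 then 1 else 0) + (if η.val b = 1 then 1 else 0) := by
      exact_mod_cast hdeg
    gcongr
  · rw [if_neg h2, if_neg h2]

lemma siteEnergy_of_saturated {η : Config Λ} {y : Site} (hy : y ∈ inner1 Λ)
    (h2 : η.val y = 2) (hnbrs : ∀ x ∈ nbrs y, x ∈ inner1 Λ ∧ η.val x = 1) :
    siteEnergy U Δ1 Δ2 η y = Δ2 - 4 * U := by
  have hdeg : bondDeg η y = 4 := by
    rw [bondDeg_of_val_eq_two h2, filter_true_of_mem fun x hx => ⟨hy, hnbrs x hx⟩, card_nbrs]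
  simp [siteEnergy, h2, hdeg, mul_comm]

lemma siteEnergy_of_val_eq_one {η : Config Λ} {y : Site} (h1 : η.val y = 1) :
    siteEnergy U Δ1 Δ2 η y = Δ1 := by
  simp [siteEnergy, h1]

end SiteEnergyBounds

section TileCharge

variable (U Δ1 Δ2 : ℝ)

noncomputable def halfBasementCharge (d c : Fin 3) : ℝ :=
  (Δ1 - siteEnergyBound U Δ1 Δ2 d c c) / 2

/-- `siteEnergyBound d c₀ c₁` depends on `c₀` and `c₁` through the same affine term. -/
lemma sub_siteEnergyBound_eq_add_halfBasementCharge (d c₀ c₁ : Fin 3) :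
    Δ1 - siteEnergyBound U Δ1 Δ2 d c₀ c₁
      = halfBasementCharge U Δ1 Δ2 d c₀ + halfBasementCharge U Δ1 Δ2 d c₁ := by
  unfold halfBasementCharge siteEnergyBound
  split_ifs <;> ring

lemma halfBasementCharge_one (c : Fin 3) : halfBasementCharge U Δ1 Δ2 1 c = 0 := by
  simp [halfBasementCharge, siteEnergyBound]

/-- The charge of a tile with center value `c` and basement values `d₁`, `d₂`: the change at
its center plus half the change at each basement site, which it shares with the next tile. -/
noncomputable def tileCharge (c d₁ d₂ : Fin 3) : ℝ :=
  (Δ2 - 4 * U - siteEnergyBound U Δ1 Δ2 c d₁ d₂)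
    + halfBasementCharge U Δ1 Δ2 d₁ c + halfBasementCharge U Δ1 Δ2 d₂ c

variable {U Δ1 Δ2}

lemma tileCharge_nonpos (hΔ1 : 0 < Δ1) (hgap : 2 * U < Δ2 - Δ1) (hsum : Δ1 + Δ2 < 4 * U)
    (c d₁ d₂ : Fin 3) : tileCharge U Δ1 Δ2 c d₁ d₂ ≤ 0 := by
  fin_cases c <;> fin_cases d₁ <;> fin_cases d₂ <;>
    simp [tileCharge, halfBasementCharge, siteEnergyBound] <;> linarith

lemma tileCharge_neg_of_left_eq_one (hΔ1 : 0 < Δ1) (hgap : 2 * U < Δ2 - Δ1)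
    (hsum : Δ1 + Δ2 < 4 * U) {c d₂ : Fin 3} (h : ¬(c = 2 ∧ d₂ = 1)) :
    tileCharge U Δ1 Δ2 c 1 d₂ < 0 := by
  fin_cases c <;> fin_cases d₂ <;>
    simp_all [tileCharge, halfBasementCharge, siteEnergyBound] <;> linarith

/-- A tile of zero charge whose west basement site has type 1 is tb-tiled, so tb-tiling
propagates eastwards from `d 0 = 1`. -/
lemma sum_tileCharge_neg (hΔ1 : 0 < Δ1) (hgap : 2 * U < Δ2 - Δ1) (hsum : Δ1 + Δ2 < 4 * U)
    {l : ℕ} (c d : ℕ → Fin 3) (hd0 : d 0 = 1)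
    (hnot : ¬((∀ i < l, c i = 2) ∧ ∀ j ≤ l, d j = 1)) :
    ∑ i ∈ range l, tileCharge U Δ1 Δ2 (c i) (d i) (d (i + 1)) < 0 := by
  have hnonpos : ∀ i ∈ range l, tileCharge U Δ1 Δ2 (c i) (d i) (d (i + 1)) ≤ 0 :=
    fun i _ => tileCharge_nonpos hΔ1 hgap hsum _ _ _
  refine (sum_nonpos hnonpos).lt_of_ne fun hzero => hnot ?_
  have hzero' := (sum_eq_zero_iff_of_nonpos hnonpos).1 hzero
  have htiled : ∀ j ≤ l, d j = 1 ∧ ∀ i < j, c i = 2 := by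
    intro j
    induction j with
    | zero => exact fun _ => ⟨hd0, by simp⟩
    | succ j ih =>
      intro hj
      obtain ⟨hdj, hc⟩ := ih (by omega)
      have htile : c j = 2 ∧ d (j + 1) = 1 := by
        by_contra h
        have hj0 := hzero' j (mem_range.2 (by omega))
        rw [hdj] at hj0
        exact (tileCharge_neg_of_left_eq_one hΔ1 hgap hsum h).ne hj0
      refine ⟨htile.2, fun i hi => ?_⟩
      rcases Nat.lt_succ_iff_lt_or_eq.1 hi with hi | rfl
      exacts [hc i hi, htile.1]
  exact ⟨fun i hi => (htiled l le_rfl).2 i hi, fun j hj => (htiled j hj).1⟩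

end TileCharge

section BridgeGeometry

variable (p : Site)

def beamSite (k : ℤ) : Site := (p.1 + k, p.2 - k)

def centerSite (k : ℤ) : Site := (p.1 + k, p.2 - 1 - k)

def basementSite (k : ℤ) : Site := (p.1 - 1 + k, p.2 - 1 - k)

variable (l : ℕ)

lemma centerSites_eq : centerSites p l = (range l).image fun i : ℕ => centerSite p i := rfl

lemma basementSites_eq :
    basementSites p l = (range (l + 1)).image fun i : ℕ => basementSite p i := rfl

lemma injective_natCast_centerSite : Function.Injective fun i : ℕ => centerSite p i := by
  intro i j h
  simpa [centerSite] using h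

lemma injective_natCast_basementSite : Function.Injective fun i : ℕ => basementSite p i := by
  intro i j h
  simpa [basementSite] using h

variable {l}

lemma beamSite_mem_beamSites {k : ℕ} (hk : k ≤ l) : beamSite p k ∈ beamSites p l :=
  mem_image_of_mem (fun i : ℕ => beamSite p i) (mem_range.2 (Nat.lt_succ_of_le hk))

lemma centerSite_mem_centerSites {k : ℕ} (hk : k < l) : centerSite p k ∈ centerSites p l :=
  mem_image_of_mem (fun i : ℕ => centerSite p i) (mem_range.2 hk)

lemma basementSite_mem_basementSites {k : ℕ} (hk : k ≤ l) :
    basementSite p k ∈ basementSites p l :=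
  mem_image_of_mem (fun i : ℕ => basementSite p i) (mem_range.2 (Nat.lt_succ_of_le hk))

variable {p}

lemma beamSites_union_basementSites_subset :
    beamSites p l ∪ basementSites p l ⊆ bridgeSupport p l :=
  union_subset (subset_union_left.trans subset_union_left) subset_union_right

lemma coord_sum_of_mem_beamSites {x : Site} (hx : x ∈ beamSites p l) :
    x.1 + x.2 = p.1 + p.2 := by
  obtain ⟨i, -, rfl⟩ := mem_image.1 hx
  ring

lemma coord_sum_of_mem_centerSites {x : Site} (hx : x ∈ centerSites p l) :
    x.1 + x.2 = p.1 + p.2 - 1 := by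
  obtain ⟨i, -, rfl⟩ := mem_image.1 hx
  ring

lemma coord_sum_of_mem_basementSites {x : Site} (hx : x ∈ basementSites p l) :
    x.1 + x.2 = p.1 + p.2 - 2 := by
  obtain ⟨i, -, rfl⟩ := mem_image.1 hx
  ring

lemma sum_bridgeSupport {M : Type*} [AddCommMonoid M] (f : Site → M) :
    ∑ x ∈ bridgeSupport p l, f x
      = ∑ x ∈ beamSites p l, f x + ∑ x ∈ centerSites p l, f x
        + ∑ x ∈ basementSites p l, f x := by
  have h₁ : Disjoint (beamSites p l) (centerSites p l) := disjoint_left.2 fun x hb hc => by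
    have := coord_sum_of_mem_beamSites hb
    have := coord_sum_of_mem_centerSites hc
    omega
  have h₂ : Disjoint (beamSites p l ∪ centerSites p l) (basementSites p l) :=
    disjoint_left.2 fun x hbc hd => by
      have := coord_sum_of_mem_basementSites hd
      rcases mem_union.1 hbc with hb | hc
      · have := coord_sum_of_mem_beamSites hb
        omega
      · have := coord_sum_of_mem_centerSites hc
        omega
  rw [bridgeSupport, sum_union h₂, sum_union h₁]

variable (p)

lemma nbrs_centerSite (k : ℤ) :
    nbrs (centerSite p k)
      = {beamSite p (k + 1), basementSite p k, beamSite p k, basementSite p (k + 1)} := by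
  ext x
  simp only [nbrs, centerSite, beamSite, basementSite, mem_insert, mem_singleton, Prod.ext_iff]
  omega

lemma nbrs_centerSite_subset {k : ℕ} (hk : k < l) :
    nbrs (centerSite p k) ⊆ beamSites p l ∪ basementSites p l := by
  intro x hx
  rw [nbrs_centerSite] at hx
  simp only [mem_insert, mem_singleton] at hx
  rcases hx with rfl | rfl | rfl | rfl
  · exact mem_union_left _ (by exact_mod_cast beamSite_mem_beamSites p (show k + 1 ≤ l by omega))
  · exact mem_union_right _ (basementSite_mem_basementSites p hk.le)
  · exact mem_union_left _ (beamSite_mem_beamSites p hk.le)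
  · exact mem_union_right _
      (by exact_mod_cast basementSite_mem_basementSites p (show k + 1 ≤ l by omega))

lemma centerSite_mem_nbrs_basementSite (k : ℤ) : centerSite p k ∈ nbrs (basementSite p k) := by
  simp only [nbrs, centerSite, basementSite, mem_insert, mem_singleton, Prod.mk.injEq, and_true]
  omega

lemma centerSite_sub_one_mem_nbrs_basementSite (k : ℤ) :
    centerSite p (k - 1) ∈ nbrs (basementSite p k) := by
  simp only [nbrs, centerSite, basementSite, mem_insert, mem_singleton, Prod.mk.injEq]
  omega

lemma centerSite_sub_one_ne (k : ℤ) : centerSite p (k - 1) ≠ centerSite p k := by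
  simp [centerSite]

lemma basementSite_ne_add_one (k : ℤ) : basementSite p k ≠ basementSite p (k + 1) := by
  simp [basementSite]

end BridgeGeometry

section BridgeTiling

variable {Λ : Finset Site}

def bridgeTbTiling (η : Config Λ) (p : Site) (l : ℕ) (x : Site) : Fin 3 :=
  if x ∈ centerSites p l then 2
  else if x ∈ beamSites p l ∪ basementSites p l then 1
  else η.val x

variable {η η' : Config Λ} {p : Site} {l : ℕ}

lemma val_eq_two_of_mem_centerSites (hη' : ∀ x, η'.val x = bridgeTbTiling η p l x) {x : Site}
    (hx : x ∈ centerSites p l) : η'.val x = 2 := by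
  rw [hη', bridgeTbTiling, if_pos hx]

lemma val_eq_one_of_mem_beamSites_union_basementSites
    (hη' : ∀ x, η'.val x = bridgeTbTiling η p l x) {x : Site}
    (hx : x ∈ beamSites p l ∪ basementSites p l) : η'.val x = 1 := by
  have hxc : x ∉ centerSites p l := fun hc => by
    have := coord_sum_of_mem_centerSites hc
    rcases mem_union.1 hx with hb | hb
    · have := coord_sum_of_mem_beamSites hb
      omega
    · have := coord_sum_of_mem_basementSites hb
      omega
  rw [hη', bridgeTbTiling, if_neg hxc, if_pos hx]

lemma val_eq_of_notMem_bridgeSupport (hη' : ∀ x, η'.val x = bridgeTbTiling η p l x) {x : Site}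
    (hx : x ∉ bridgeSupport p l) : η'.val x = η.val x := by
  simp only [bridgeSupport, mem_union, not_or] at hx
  rw [hη', bridgeTbTiling, if_neg hx.1.2, if_neg (by simp [hx.1.1, hx.2])]

lemma val_eq_one_of_nbr_notMem_bridgeSupport (hη' : ∀ x, η'.val x = bridgeTbTiling η p l x)
    {x y : Site} (hx : x ∈ bridgeSupport p l) (hy : y ∈ nbrs x)
    (hyS : y ∉ bridgeSupport p l) : η'.val x = 1 := by
  by_cases hxc : x ∈ centerSites p l
  · rw [centerSites_eq, mem_image] at hxc
    obtain ⟨i, hi, rfl⟩ := hxc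
    exact absurd (beamSites_union_basementSites_subset
      (nbrs_centerSite_subset p (mem_range.1 hi) hy)) hyS
  · refine val_eq_one_of_mem_beamSites_union_basementSites hη' ?_
    simp only [bridgeSupport, mem_union] at hx ⊢
    tauto

end BridgeTiling

section BridgeEnergy

variable (U Δ1 Δ2 : ℝ) {Λ : Finset Site} {η η' : Config Λ} {p : Site} {l : ℕ}

lemma sum_beamSites_siteEnergy_sub (hη' : ∀ x, η'.val x = bridgeTbTiling η p l x)
    (hbeam : ∀ x ∈ beamSites p l, η.val x = 1) :
    ∑ y ∈ beamSites p l, (siteEnergy U Δ1 Δ2 η' y - siteEnergy U Δ1 Δ2 η y) = 0 :=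
  sum_eq_zero fun y hy => by
    rw [siteEnergy_of_val_eq_one U Δ1 Δ2 (hbeam y hy),
      siteEnergy_of_val_eq_one U Δ1 Δ2
        (val_eq_one_of_mem_beamSites_union_basementSites hη' (mem_union_left _ hy)), sub_self]

lemma sum_centerSites_siteEnergy_sub_le (hU : 0 ≤ U)
    (hη' : ∀ x, η'.val x = bridgeTbTiling η p l x) (hsupp : bridgeSupport p l ⊆ inner2 Λ) :
    ∑ y ∈ centerSites p l, (siteEnergy U Δ1 Δ2 η' y - siteEnergy U Δ1 Δ2 η y)
      ≤ ∑ i ∈ range l, (Δ2 - 4 * U - siteEnergyBound U Δ1 Δ2 (η.val (centerSite p i))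
          (η.val (basementSite p i)) (η.val (basementSite p (i + 1)))) := by
  rw [centerSites_eq, sum_image fun i _ j _ h => injective_natCast_centerSite p h]
  refine sum_le_sum fun i hi => ?_
  have hi := mem_range.1 hi
  have hc : centerSite p i ∈ bridgeSupport p l :=
    mem_union_left _ (mem_union_right _ (centerSite_mem_centerSites p hi))
  have hnbrs : ∀ x ∈ nbrs (centerSite p i), x ∈ inner1 Λ ∧ η'.val x = 1 := fun x hx =>
    ⟨nbrs_subset_inner1_of_mem_inner2 (hsupp hc) hx,
      val_eq_one_of_mem_beamSites_union_basementSites hη' (nbrs_centerSite_subset p hi hx)⟩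
  rw [siteEnergy_of_saturated U Δ1 Δ2 (inner2_subset_inner1 Λ (hsupp hc))
    (val_eq_two_of_mem_centerSites hη' (centerSite_mem_centerSites p hi)) hnbrs]
  have hbasement : basementSite p i ∈ nbrs (centerSite p i) := by simp [nbrs_centerSite]
  have hbasement' : basementSite p (i + 1) ∈ nbrs (centerSite p i) := by simp [nbrs_centerSite]
  linarith [siteEnergyBound_le_siteEnergy U Δ1 Δ2 hU η hbasement hbasement'
    (basementSite_ne_add_one p i)]

lemma sum_basementSites_siteEnergy_sub_le (hU : 0 ≤ U)
    (hη' : ∀ x, η'.val x = bridgeTbTiling η p l x) (hW : η.val (basementSite p 0) = 1)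
    (hE : η.val (basementSite p l) = 1) :
    ∑ y ∈ basementSites p l, (siteEnergy U Δ1 Δ2 η' y - siteEnergy U Δ1 Δ2 η y)
      ≤ ∑ i ∈ range l,
          (halfBasementCharge U Δ1 Δ2 (η.val (basementSite p i)) (η.val (centerSite p i))
            + halfBasementCharge U Δ1 Δ2 (η.val (basementSite p (i + 1)))
              (η.val (centerSite p i))) := by
  rw [basementSites_eq, sum_image fun i _ j _ h => injective_natCast_basementSite p h]
  calc _ ≤ ∑ j ∈ range (l + 1), (Δ1 - siteEnergyBound U Δ1 Δ2 (η.val (basementSite p j))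
          (η.val (centerSite p (j - 1))) (η.val (centerSite p j))) := by
        refine sum_le_sum fun j hj => ?_
        have hj := basementSite_mem_basementSites p (Nat.lt_succ_iff.1 (mem_range.1 hj))
        rw [siteEnergy_of_val_eq_one U Δ1 Δ2
          (val_eq_one_of_mem_beamSites_union_basementSites hη' (mem_union_right _ hj))]
        linarith [siteEnergyBound_le_siteEnergy U Δ1 Δ2 hU η
          (centerSite_sub_one_mem_nbrs_basementSite p j) (centerSite_mem_nbrs_basementSite p j)
          (centerSite_sub_one_ne p j)]
    _ = _ := by
        simp only [sub_siteEnergyBound_eq_add_halfBasementCharge, sum_add_distrib]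
        rw [sum_range_succ', sum_range_succ]
        simp [hW, hE, halfBasementCharge_one, add_comm]

lemma sum_bridgeSupport_siteEnergy_sub_le (hU : 0 ≤ U)
    (hη' : ∀ x, η'.val x = bridgeTbTiling η p l x)
    (hsupp : bridgeSupport p l ⊆ inner2 Λ) (hbeam : ∀ x ∈ beamSites p l, η.val x = 1)
    (hW : η.val (basementSite p 0) = 1) (hE : η.val (basementSite p l) = 1) :
    ∑ y ∈ bridgeSupport p l, (siteEnergy U Δ1 Δ2 η' y - siteEnergy U Δ1 Δ2 η y)
      ≤ ∑ i ∈ range l, tileCharge U Δ1 Δ2 (η.val (centerSite p i))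
          (η.val (basementSite p i)) (η.val (basementSite p (i + 1))) := by
  rw [sum_bridgeSupport, sum_beamSites_siteEnergy_sub U Δ1 Δ2 hη' hbeam, zero_add]
  have hcenter := sum_centerSites_siteEnergy_sub_le U Δ1 Δ2 hU hη' hsupp
  have hbasement := sum_basementSites_siteEnergy_sub_le U Δ1 Δ2 hU hη' hW hE
  simp only [tileCharge, sum_add_distrib] at hbasement ⊢
  linarith

end BridgeEnergy

theorem tb_tiling_bridge_lowers_energy_general
    (U Δ1 Δ2 : ℝ) (hU : 0 < U) (hΔ1 : 0 < Δ1)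
    (hgap : 2 * U < Δ2 - Δ1) (hsum : Δ1 + Δ2 < 4 * U)
    (Λ : Finset Site) (η η' : Config Λ) (p : Site) (l : ℕ)
    (hsupp : bridgeSupport p l ⊆ inner2 Λ)
    (hbeam : ∀ x ∈ beamSites p l, η.val x = 1)
    (hpillW : η.val (p.1 - 1, p.2 - 1) = 1)
    (hpillE : η.val (p.1 - 1 + (l : ℤ), p.2 - 1 - (l : ℤ)) = 1)
    (hnot : ¬ ((∀ x ∈ centerSites p l, η.val x = 2) ∧
        ∀ x ∈ basementSites p l, η.val x = 1))
    (hη' : ∀ x, η'.val x =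
        if x ∈ centerSites p l then 2
        else if x ∈ beamSites p l ∪ basementSites p l then 1
        else η.val x) :
    energy U Δ1 Δ2 η' < energy U Δ1 Δ2 η := by
  have hW : η.val (basementSite p 0) = 1 := by simpa [basementSite] using hpillW
  have hSΛ : bridgeSupport p l ⊆ Λ :=
    hsupp.trans ((inner2_subset_inner1 Λ).trans (inner1_subset Λ))
  have hnot' : ¬((∀ i < l, η.val (centerSite p i) = 2) ∧
      ∀ j ≤ l, η.val (basementSite p j) = 1) := by
    simpa only [centerSites_eq, basementSites_eq, forall_mem_image, mem_range,
      Nat.lt_succ_iff] using hnot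
  rw [← sub_neg]
  calc energy U Δ1 Δ2 η' - energy U Δ1 Δ2 η
      ≤ ∑ y ∈ bridgeSupport p l, (siteEnergy U Δ1 Δ2 η' y - siteEnergy U Δ1 Δ2 η y) :=
        energy_sub_le_sum_siteEnergy_sub U Δ1 Δ2 hU.le hSΛ
          (fun _ => val_eq_of_notMem_bridgeSupport hη')
          (fun _ hx _ => val_eq_one_of_nbr_notMem_bridgeSupport hη' hx)
    _ ≤ ∑ i ∈ range l, tileCharge U Δ1 Δ2 (η.val (centerSite p i))
          (η.val (basementSite p i)) (η.val (basementSite p (i + 1))) :=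
        sum_bridgeSupport_siteEnergy_sub_le U Δ1 Δ2 hU.le hη' hsupp hbeam hW hpillE
    _ < 0 := by
        simpa using sum_tileCharge_neg hΔ1 hgap hsum (fun i => η.val (centerSite p i))
          (fun j => η.val (basementSite p j)) hW hnot'

/-- tb-tiling the support of a south-bridge whose support is not tb-tiled
strictly lowers the energy. -/
theorem tb_tiling_bridge_lowers_energy
    (U Δ1 Δ2 : ℝ) (hU : 0 < U) (hΔ1 : 0 < Δ1) (hΔ1U : Δ1 < U)
    (hgap : 2 * U < Δ2 - Δ1) (hsum : Δ1 + Δ2 < 4 * U)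
    (Λ : Finset Site) (η η' : Config Λ) (p : Site) (l : ℕ) (hl : 1 ≤ l)
    (hsupp : bridgeSupport p l ⊆ inner2 Λ)
    (hbeam : ∀ x ∈ beamSites p l, η.val x = 1)
    (hpillW : η.val (p.1 - 1, p.2 - 1) = 1)
    (hpillE : η.val (p.1 - 1 + (l : ℤ), p.2 - 1 - (l : ℤ)) = 1)
    (hnot : ¬ ((∀ x ∈ centerSites p l, η.val x = 2) ∧
        ∀ x ∈ basementSites p l, η.val x = 1))
    (hη' : ∀ x, η'.val x =
        if x ∈ centerSites p l then 2
        else if x ∈ beamSites p l ∪ basementSites p l then 1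
        else η.val x) :
    energy U Δ1 Δ2 η' < energy U Δ1 Δ2 η :=
  tb_tiling_bridge_lowers_energy_general U Δ1 Δ2 hU hΔ1 hgap hsum Λ η η' p l hsupp hbeam hpillW
    hpillE hnot hη'
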